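/- arXiv:2510.25466 — 3 statements merged into one kernel-verified Lean document; each statement's English description precedes it below -/
import Mathlib

section
/- Let ρ and σ be density matrices on a finite-dimensional Hilbert space with σ positive definite. Let Δ = ρ − σ, T = ‖Δ‖ (Frobenius norm), and β = λ_min(σ) the smallest eigenvalue of σ. Then the quantum relative entropy satisfies D(ρ‖σ) ≤ T²/β. -/
/-!
Diagonalise `ρ = ∑ pᵢ |uᵢ⟩⟨uᵢ|` and `σ = ∑ qⱼ |vⱼ⟩⟨vⱼ|`. Every trace `Tr (f ρ * g σ)` equals
`∑ᵢⱼ wᵢⱼ f(pᵢ) g(qⱼ)` with the doubly stochastic weights `wᵢⱼ = |⟨uᵢ, vⱼ⟩|²`, so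
`D(ρ‖σ) = ∑ wᵢⱼ pᵢ (log pᵢ - log qⱼ)` and `‖ρ - σ‖² = ∑ wᵢⱼ (pᵢ - qⱼ)²`. Termwise,
`p log (p / q) ≤ p (p / q - 1) = (p - q)² / q + (p - q)`, and `q ≥ β`; the linear terms add up to
`Tr ρ - Tr σ = 0`.
-/

open Matrix
open scoped ComplexOrder

noncomputable def frobNorm {m n : Type*} [Fintype m] [Fintype n] (M : Matrix m n ℂ) : ℝ :=
  Real.sqrt (∑ i, ∑ j, ‖M i j‖ ^ 2)

/-- Matrix logarithm of a Hermitian matrix, defined through its spectral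
decomposition (with the convention `log 0 = 0` on the spectrum); `0` otherwise. -/
noncomputable def matLog {n : ℕ} (M : Matrix (Fin n) (Fin n) ℂ) : Matrix (Fin n) (Fin n) ℂ :=
  if h : M.IsHermitian then
    (h.eigenvectorUnitary : Matrix (Fin n) (Fin n) ℂ) *
      Matrix.diagonal (fun i => (Real.log (h.eigenvalues i) : ℂ)) *
      star (h.eigenvectorUnitary : Matrix (Fin n) (Fin n) ℂ)
  else 0

/-- Quantum relative entropy `D(ρ‖σ) = Tr(ρ (log ρ − log σ))` (real part). -/
noncomputable def relEnt {n : ℕ} (ρ σ : Matrix (Fin n) (Fin n) ℂ) : ℝ :=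
  ((ρ * (matLog ρ - matLog σ)).trace).re

namespace Matrix

variable {ι : Type*} [Fintype ι] [DecidableEq ι]

lemma sum_normSq_row_eq_one {W : Matrix ι ι ℂ} (hW : W ∈ unitaryGroup ι ℂ) (i : ι) :
    ∑ j, Complex.normSq (W i j) = 1 := by
  have h := congr_fun (congr_fun (mem_unitaryGroup_iff.mp hW) i) i
  simp only [mul_apply, star_apply, RCLike.star_def, Complex.mul_conj, one_apply_eq] at h
  exact_mod_cast h

lemma sum_normSq_col_eq_one {W : Matrix ι ι ℂ} (hW : W ∈ unitaryGroup ι ℂ) (j : ι) :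
    ∑ i, Complex.normSq (W i j) = 1 := by
  simpa [star_apply] using sum_normSq_row_eq_one (Unitary.star_mem hW) j

lemma frobNorm_sq_eq_re_trace_mul_conjTranspose {m n : Type*} [Fintype m] [Fintype n]
    (M : Matrix m n ℂ) : frobNorm M ^ 2 = (M * Mᴴ).trace.re := by
  rw [frobNorm, Real.sq_sqrt (by positivity)]
  simp [trace, mul_apply, Complex.mul_conj, Complex.sq_norm]

lemma trace_diagonal_mul_mul_diagonal_mul_star (W : Matrix ι ι ℂ) (d e : ι → ℝ) :
    (diagonal (RCLike.ofReal ∘ d) * W * diagonal (RCLike.ofReal ∘ e) * star W).trace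
      = ((∑ i, ∑ j, Complex.normSq (W i j) * (d i * e j) : ℝ) : ℂ) := by
  rw [trace]
  push_cast
  refine Finset.sum_congr rfl fun i _ => ?_
  rw [diag, mul_apply]
  refine Finset.sum_congr rfl fun j _ => ?_
  rw [mul_diagonal, diagonal_mul, star_apply, RCLike.star_def, ← Complex.mul_conj]
  simp only [Function.comp_apply, RCLike.ofReal_eq_complex_ofReal]
  ring

lemma trace_conj_diagonal_mul_conj_diagonal (U V : Matrix ι ι ℂ) (d e : ι → ℝ) :
    (U * diagonal (RCLike.ofReal ∘ d) * star U *
        (V * diagonal (RCLike.ofReal ∘ e) * star V)).trace =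
      ((∑ i, ∑ j, Complex.normSq ((star U * V) i j) * (d i * e j) : ℝ) : ℂ) := by
  rw [← trace_diagonal_mul_mul_diagonal_mul_star, star_mul, star_star]
  simp only [Matrix.mul_assoc]
  rw [trace_mul_comm U]
  simp only [Matrix.mul_assoc]

namespace IsHermitian

variable {A B : Matrix ι ι ℂ} (hA : A.IsHermitian) (hB : B.IsHermitian)

noncomputable def transitionWeight (i j : ι) : ℝ :=
  Complex.normSq ((star (hA.eigenvectorUnitary : Matrix ι ι ℂ) * hB.eigenvectorUnitary) i j)

lemma transitionWeight_nonneg (i j : ι) : 0 ≤ hA.transitionWeight hB i j :=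
  Complex.normSq_nonneg _

lemma transitionWeight_self (i j : ι) : hA.transitionWeight hA i j = if i = j then 1 else 0 := by
  rw [transitionWeight, Unitary.coe_star_mul_self, one_apply]
  split_ifs <;> simp

lemma sum_sum_transitionWeight_self_mul (F : ι → ι → ℝ) :
    ∑ i, ∑ j, hA.transitionWeight hA i j * F i j = ∑ i, F i i := by
  simp only [transitionWeight_self, ite_mul, one_mul, zero_mul, Finset.sum_ite_eq,
    Finset.mem_univ, if_true]

lemma sum_sum_transitionWeight_mul_left (f : ι → ℝ) :
    ∑ i, ∑ j, hA.transitionWeight hB i j * f i = ∑ i, f i := by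
  have hW := mul_mem (Unitary.star_mem hA.eigenvectorUnitary.2) hB.eigenvectorUnitary.2
  simp only [← Finset.sum_mul, transitionWeight, sum_normSq_row_eq_one hW, one_mul]

lemma sum_sum_transitionWeight_mul_right (g : ι → ℝ) :
    ∑ i, ∑ j, hA.transitionWeight hB i j * g j = ∑ j, g j := by
  have hW := mul_mem (Unitary.star_mem hA.eigenvectorUnitary.2) hB.eigenvectorUnitary.2
  rw [Finset.sum_comm]
  simp only [← Finset.sum_mul, transitionWeight, sum_normSq_col_eq_one hW, one_mul]

lemma cfc_id_eq : hA.cfc id = A :=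
  hA.spectral_theorem.symm

lemma trace_cfc_mul_cfc (f g : ℝ → ℝ) :
    (hA.cfc f * hB.cfc g).trace = ((∑ i, ∑ j, hA.transitionWeight hB i j *
      (f (hA.eigenvalues i) * g (hB.eigenvalues j)) : ℝ) : ℂ) :=
  trace_conj_diagonal_mul_conj_diagonal _ _ _ _

lemma trace_mul_cfc (g : ℝ → ℝ) :
    (A * hB.cfc g).trace = ((∑ i, ∑ j, hA.transitionWeight hB i j *
      (hA.eigenvalues i * g (hB.eigenvalues j)) : ℝ) : ℂ) := by
  have h := hA.trace_cfc_mul_cfc hB id g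
  rwa [hA.cfc_id_eq] at h

lemma trace_mul :
    (A * B).trace = ((∑ i, ∑ j, hA.transitionWeight hB i j *
      (hA.eigenvalues i * hB.eigenvalues j) : ℝ) : ℂ) := by
  have h := hA.trace_mul_cfc hB id
  rwa [hB.cfc_id_eq] at h

lemma trace_mul_self : (A * A).trace = ((∑ i, hA.eigenvalues i ^ 2 : ℝ) : ℂ) := by
  rw [hA.trace_mul hA, sum_sum_transitionWeight_self_mul]
  simp only [sq]

lemma sum_sum_transitionWeight_mul_sub :
    ∑ i, ∑ j, hA.transitionWeight hB i j * (hA.eigenvalues i - hB.eigenvalues j) =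
      (A.trace - B.trace).re := by
  simp only [mul_sub, Finset.sum_sub_distrib, sum_sum_transitionWeight_mul_left,
    sum_sum_transitionWeight_mul_right, hA.trace_eq_sum_eigenvalues, hB.trace_eq_sum_eigenvalues]
  simp

lemma frobNorm_sub_sq :
    frobNorm (A - B) ^ 2 =
      ∑ i, ∑ j, hA.transitionWeight hB i j * (hA.eigenvalues i - hB.eigenvalues j) ^ 2 := by
  have hsq : (A - B) * (A - B)ᴴ = A * A - A * B - B * A + B * B := by
    rw [(hA.sub hB).eq]
    noncomm_ring
  set w := hA.transitionWeight hB
  set a := hA.eigenvalues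
  set b := hB.eigenvalues
  have hexpand : ∑ i, ∑ j, w i j * (a i - b j) ^ 2 = ∑ i, ∑ j, w i j * a i ^ 2
      - 2 * ∑ i, ∑ j, w i j * (a i * b j) + ∑ i, ∑ j, w i j * b j ^ 2 := by
    simp only [Finset.mul_sum, ← Finset.sum_sub_distrib, ← Finset.sum_add_distrib]
    refine Finset.sum_congr rfl fun i _ => Finset.sum_congr rfl fun j _ => ?_
    ring
  rw [frobNorm_sq_eq_re_trace_mul_conjTranspose, hsq, trace_add, trace_sub, trace_sub,
    trace_mul_comm B A, hA.trace_mul_self, hB.trace_mul_self, hA.trace_mul hB, hexpand,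
    sum_sum_transitionWeight_mul_left, sum_sum_transitionWeight_mul_right]
  simp only [Complex.add_re, Complex.sub_re, Complex.ofReal_re]
  ring

end IsHermitian

end Matrix

lemma matLog_eq_cfc {n : ℕ} {A : Matrix (Fin n) (Fin n) ℂ} (hA : A.IsHermitian) :
    matLog A = hA.cfc Real.log := by
  rw [matLog, dif_pos hA]
  rfl

lemma relEnt_eq_sum_transitionWeight {n : ℕ} {ρ σ : Matrix (Fin n) (Fin n) ℂ}
    (hρ : ρ.IsHermitian) (hσ : σ.IsHermitian) :
    relEnt ρ σ = ∑ i, ∑ j, hρ.transitionWeight hσ i j *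
      (hρ.eigenvalues i * (Real.log (hρ.eigenvalues i) - Real.log (hσ.eigenvalues j))) := by
  rw [relEnt, mul_sub, trace_sub, matLog_eq_cfc hρ, matLog_eq_cfc hσ, hρ.trace_mul_cfc hρ,
    hρ.trace_mul_cfc hσ, ← Complex.ofReal_sub, Complex.ofReal_re,
    hρ.sum_sum_transitionWeight_self_mul, ← hρ.sum_sum_transitionWeight_mul_left hσ,
    ← Finset.sum_sub_distrib]
  refine Finset.sum_congr rfl fun i _ => ?_
  rw [← Finset.sum_sub_distrib]
  refine Finset.sum_congr rfl fun j _ => ?_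
  ring

lemma mul_log_sub_log_le {p q β : ℝ} (hp : 0 ≤ p) (hβ : 0 < β) (hβq : β ≤ q) :
    p * (Real.log p - Real.log q) ≤ (p - q) ^ 2 / β + (p - q) := by
  have hq : 0 < q := hβ.trans_le hβq
  have hlog : p * (Real.log p - Real.log q) ≤ p * (p / q - 1) := by
    rcases hp.eq_or_lt with rfl | hp
    · simp
    rw [← Real.log_div hp.ne' hq.ne']
    exact mul_le_mul_of_nonneg_left (Real.log_le_sub_one_of_pos (div_pos hp hq)) hp.le
  calc p * (Real.log p - Real.log q) ≤ p * (p / q - 1) := hlog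
    _ = (p - q) ^ 2 / q + (p - q) := by field_simp; ring
    _ ≤ (p - q) ^ 2 / β + (p - q) := by gcongr

/-- If `ρ`, `σ` are density matrices with `σ` positive definite,
`Δ = ρ − σ`, `T = ‖Δ‖` (Frobenius) and `β = λ_min(σ)`, then `D(ρ‖σ) ≤ T²/β`. -/
theorem relEnt_le_sq_div_min_eigenvalue {n : ℕ}
    {ρ σ : Matrix (Fin n) (Fin n) ℂ}
    (hρ : ρ.PosSemidef) (hρtr : ρ.trace = 1)
    (hσ : σ.PosDef) (hσtr : σ.trace = 1)
    (β : ℝ) (hβ₁ : ∀ i, β ≤ hσ.1.eigenvalues i) (hβ₂ : ∃ i, hσ.1.eigenvalues i = β) :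
    relEnt ρ σ ≤ frobNorm (ρ - σ) ^ 2 / β := by
  have hβ : 0 < β := by
    obtain ⟨i, rfl⟩ := hβ₂
    exact hσ.eigenvalues_pos i
  set w := hρ.1.transitionWeight hσ.1
  set p := hρ.1.eigenvalues
  set q := hσ.1.eigenvalues
  calc relEnt ρ σ = ∑ i, ∑ j, w i j * (p i * (Real.log (p i) - Real.log (q j))) :=
        relEnt_eq_sum_transitionWeight hρ.1 hσ.1
    _ ≤ ∑ i, ∑ j, w i j * ((p i - q j) ^ 2 / β + (p i - q j)) := by
        gcongr with i _ j _
        · exact hρ.1.transitionWeight_nonneg hσ.1 i j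
        · exact mul_log_sub_log_le (hρ.eigenvalues_nonneg i) hβ (hβ₁ j)
    _ = (∑ i, ∑ j, w i j * (p i - q j) ^ 2) / β + ∑ i, ∑ j, w i j * (p i - q j) := by
        simp only [mul_add, Finset.sum_add_distrib, Finset.sum_div, mul_div_assoc]
    _ = frobNorm (ρ - σ) ^ 2 / β := by
        rw [← hρ.1.frobNorm_sub_sq hσ.1, hρ.1.sum_sum_transitionWeight_mul_sub hσ.1,
          hρtr, hσtr]
        simp
end

section
/- Let ρ̃₁ ∈ ℂ^{d₁×d₁} with all diagonal entries summing to 1, and let ρ₁ be a density matrix on ℂ^{d₁} (so its diagonal entries also sum to 1). Then for any matrices ρ̃₂, ρ₂ ∈ ℂ^{d₂×d₂}, ‖ρ̃₂ − ρ₂‖ ≤ √(d₁) · ‖ρ̃₁ ⊗ ρ̃₂ − ρ₁ ⊗ ρ₂‖, where ‖·‖ is the Frobenius norm. -/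
open Matrix
open scoped Kronecker

/-!
Take the trace of the first tensor factor on both sides: since both traces are `1`,
`ρ̃₂ - ρ₂ = ∑ᵢ ((ρ̃₁)ᵢᵢ ρ̃₂ - (ρ₁)ᵢᵢ ρ₂)`, and the `i`-th summand is the `(i, i)` diagonal block
of `ρ̃₁ ⊗ ρ̃₂ - ρ₁ ⊗ ρ₂`. By the triangle and Cauchy–Schwarz inequalities the square of the norm
of this sum of `d₁` terms is at most `d₁` times the sum of the squared norms of the diagonal
blocks, which in turn is at most the squared Frobenius norm of the whole matrix.
-/

theorem Finset.sum_smul_sub_smul_eq_sub {ι R M : Type*} [Ring R] [AddCommGroup M] [Module R M]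
    {s : Finset ι} {a b : ι → R} (ha : ∑ i ∈ s, a i = 1) (hb : ∑ i ∈ s, b i = 1) (x y : M) :
    ∑ i ∈ s, (a i • x - b i • y) = x - y := by
  rw [Finset.sum_sub_distrib, ← Finset.sum_smul, ← Finset.sum_smul, ha, hb, one_smul, one_smul]

theorem norm_sum_sq_le_card_mul_sum_norm_sq {ι E : Type*} [SeminormedAddCommGroup E]
    (s : Finset ι) (f : ι → E) :
    ‖∑ i ∈ s, f i‖ ^ 2 ≤ s.card * ∑ i ∈ s, ‖f i‖ ^ 2 :=
  calc ‖∑ i ∈ s, f i‖ ^ 2 ≤ (∑ i ∈ s, ‖f i‖) ^ 2 := by gcongr; exact norm_sum_le s f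
    _ ≤ s.card * ∑ i ∈ s, ‖f i‖ ^ 2 := sq_sum_le_card_mul_sum_sq

section FrobeniusNorm

attribute [local instance] Matrix.frobeniusSeminormedAddCommGroup

namespace Matrix

variable {l m n α : Type*}

theorem kronecker_sub_kronecker_diagonal_block [Ring α]
    (A C : Matrix l l α) (B D : Matrix m n α) (i : l) :
    (of fun j k => (A ⊗ₖ B - C ⊗ₖ D) (i, j) (i, k)) = A i i • B - C i i • D := by
  ext j k
  simp

variable [Fintype l] [Fintype m] [Fintype n]

theorem frobenius_norm_sq [SeminormedAddCommGroup α] (A : Matrix m n α) :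
    ‖A‖ ^ 2 = ∑ i, ∑ j, ‖A i j‖ ^ 2 := by
  rw [frobenius_norm_def, ← Real.sqrt_eq_rpow, Real.sq_sqrt (by positivity)]
  simp only [Real.rpow_two]

theorem sum_frobenius_norm_sq_diagonal_block_le [SeminormedAddCommGroup α]
    (M : Matrix (l × m) (l × n) α) :
    ∑ i, ‖of fun j k => M (i, j) (i, k)‖ ^ 2 ≤ ‖M‖ ^ 2 := by
  simp only [frobenius_norm_sq, Fintype.sum_prod_type, of_apply]
  gcongr with i _ j _
  exact Finset.single_le_sum (f := fun i' => ∑ k, ‖M (i, j) (i', k)‖ ^ 2)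
    (fun _ _ => by positivity) (Finset.mem_univ i)

theorem norm_sub_sq_le_card_mul_norm_kronecker_sub_sq [SeminormedRing α]
    {A C : Matrix l l α} (hA : A.trace = 1) (hC : C.trace = 1) (B D : Matrix m n α) :
    ‖B - D‖ ^ 2 ≤ Fintype.card l * ‖A ⊗ₖ B - C ⊗ₖ D‖ ^ 2 :=
  calc ‖B - D‖ ^ 2 = ‖∑ i, (A i i • B - C i i • D)‖ ^ 2 := by
        rw [Finset.sum_smul_sub_smul_eq_sub (a := fun i => A i i) (b := fun i => C i i) hA hC]
    _ ≤ Fintype.card l * ∑ i, ‖A i i • B - C i i • D‖ ^ 2 :=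
        norm_sum_sq_le_card_mul_sum_norm_sq Finset.univ _
    _ ≤ Fintype.card l * ‖A ⊗ₖ B - C ⊗ₖ D‖ ^ 2 := by
        gcongr
        simpa only [kronecker_sub_kronecker_diagonal_block] using
          sum_frobenius_norm_sq_diagonal_block_le (A ⊗ₖ B - C ⊗ₖ D)

end Matrix

theorem frobNorm_eq_norm {m n : Type*} [Fintype m] [Fintype n] (M : Matrix m n ℂ) :
    frobNorm M = ‖M‖ := by
  rw [frobNorm, ← Matrix.frobenius_norm_sq, Real.sqrt_sq (norm_nonneg _)]

theorem frobNorm_sub_le_sqrt_card_mul_frobNorm_kronecker_sub {l m n : Type*} [Fintype l]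
    [Fintype m] [Fintype n] {A C : Matrix l l ℂ} (hA : A.trace = 1) (hC : C.trace = 1)
    (B D : Matrix m n ℂ) :
    frobNorm (B - D) ≤ Real.sqrt (Fintype.card l) * frobNorm (A ⊗ₖ B - C ⊗ₖ D) := by
  rw [frobNorm_eq_norm, frobNorm_eq_norm, ← Real.sqrt_sq (norm_nonneg (A ⊗ₖ B - C ⊗ₖ D)),
    ← Real.sqrt_mul (Nat.cast_nonneg _)]
  exact Real.le_sqrt_of_sq_le (Matrix.norm_sub_sq_le_card_mul_norm_kronecker_sub_sq hA hC B D)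

end FrobeniusNorm

/-- If the diagonal entries of `ρ̃₁` and of `ρ₁` each sum to `1`, then for any
matrices `ρ̃₂`, `ρ₂`, `‖ρ̃₂ − ρ₂‖ ≤ √(d₁) ‖ρ̃₁ ⊗ ρ̃₂ − ρ₁ ⊗ ρ₂‖`. -/
theorem frobNorm_sub_le_sqrt_mul_kron {d₁ d₂ : ℕ}
    (ρt₁ ρ₁ : Matrix (Fin d₁) (Fin d₁) ℂ)
    (hρt₁ : ∑ i, ρt₁ i i = 1) (hρ₁ : ∑ i, ρ₁ i i = 1)
    (ρt₂ ρ₂ : Matrix (Fin d₂) (Fin d₂) ℂ) :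
    frobNorm (ρt₂ - ρ₂) ≤ Real.sqrt d₁ * frobNorm (ρt₁ ⊗ₖ ρt₂ - ρ₁ ⊗ₖ ρ₂) := by
  simpa using frobNorm_sub_le_sqrt_card_mul_frobNorm_kronecker_sub hρt₁ hρ₁ ρt₂ ρ₂
end

section
/- Let |φ_l⟩, 1 ≤ l ≤ 6, be the octahedral qubit states |0⟩, |1⟩, (|0⟩±|1⟩)/√2, (|0⟩±i|1⟩)/√2. Define P_l^{(3)} = (2/3)(|φ_l⟩⟨φ_l|)^{⊗3} for 1 ≤ l ≤ 6 and P₇^{(3)} = I₈ − Σ_{l=1}^{6} P_l^{(3)}. Then P₇^{(3)} is positive semidefinite, so {P_l^{(3)}}_{l=1}^{7} forms a valid POVM on (ℂ²)^{⊗3}. -/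
open Matrix
open scoped Kronecker ComplexOrder

/-- The six octahedral qubit states `|0⟩, |1⟩, (|0⟩±|1⟩)/√2, (|0⟩±i|1⟩)/√2`. -/
noncomputable def octa : Fin 6 → Fin 2 → ℂ
  | 0 => ![1, 0]
  | 1 => ![0, 1]
  | 2 => ![(Real.sqrt 2 : ℂ)⁻¹, (Real.sqrt 2 : ℂ)⁻¹]
  | 3 => ![(Real.sqrt 2 : ℂ)⁻¹, -(Real.sqrt 2 : ℂ)⁻¹]
  | 4 => ![(Real.sqrt 2 : ℂ)⁻¹, Complex.I * (Real.sqrt 2 : ℂ)⁻¹]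
  | 5 => ![(Real.sqrt 2 : ℂ)⁻¹, -(Complex.I * (Real.sqrt 2 : ℂ)⁻¹)]

/-- Rank-one projector onto an octahedral vector. -/
noncomputable def octaProj (l : Fin 6) : Matrix (Fin 2) (Fin 2) ℂ :=
  Matrix.vecMulVec (octa l) (star (octa l))

lemma h2 : ((Real.sqrt 2 : ℂ))⁻¹ * ((Real.sqrt 2 : ℂ))⁻¹ = 1/2 := by
  rw [← mul_inv, ← Complex.ofReal_mul, Real.mul_self_sqrt (by norm_num)]
  norm_num

lemma hstar : star ((Real.sqrt 2 : ℂ))⁻¹ = ((Real.sqrt 2 : ℂ))⁻¹ := by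
  rw [RCLike.star_def, map_inv₀, Complex.conj_ofReal]

lemma p2 : octaProj 2 = !![1/2, 1/2; 1/2, 1/2] := by
  ext i j
  fin_cases i <;> fin_cases j <;>
    simp [octaProj, octa, vecMulVec_apply, hstar, h2]

lemma p0 : octaProj 0 = !![1, 0; 0, 0] := by
  ext i j
  fin_cases i <;> fin_cases j <;>
    simp [octaProj, octa, vecMulVec_apply, hstar, h2]

lemma p1 : octaProj 1 = !![0, 0; 0, 1] := by
  ext i j
  fin_cases i <;> fin_cases j <;>
    simp [octaProj, octa, vecMulVec_apply, hstar, h2]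

lemma p3 : octaProj 3 = !![1/2, -(1/2); -(1/2), 1/2] := by
  ext i j
  fin_cases i <;> fin_cases j <;>
    simp [octaProj, octa, vecMulVec_apply, hstar, h2, mul_comm]

lemma p4 : octaProj 4 = !![1/2, -(Complex.I/2); Complex.I/2, 1/2] := by
  ext i j
  fin_cases i <;> fin_cases j <;>
    simp [octaProj, octa, vecMulVec_apply, hstar, h2, Complex.ext_iff, mul_comm,
      mul_assoc, mul_left_comm]

lemma p5 : octaProj 5 = !![1/2, Complex.I/2; -(Complex.I/2), 1/2] := by
  ext i j
  fin_cases i <;> fin_cases j <;>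
    simp [octaProj, octa, vecMulVec_apply, hstar, h2, Complex.ext_iff, mul_comm,
      mul_assoc, mul_left_comm]

noncomputable def wt (p : (Fin 2 × Fin 2) × Fin 2) : ℕ := p.1.1.val + p.1.2.val + p.2.val

noncomputable def Mmat : Matrix ((Fin 2 × Fin 2) × Fin 2) ((Fin 2 × Fin 2) × Fin 2) ℂ :=
  Matrix.of fun i j =>
    if wt i = wt j ∧ (wt i = 1 ∨ wt i = 2) then (if i = j then 2/3 else -(1/3)) else 0

set_option maxHeartbeats 2000000 in
lemma hM : ((1 : Matrix ((Fin 2 × Fin 2) × Fin 2) ((Fin 2 × Fin 2) × Fin 2) ℂ) -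
      ∑ l : Fin 6, (2/3 : ℂ) • ((octaProj l ⊗ₖ octaProj l) ⊗ₖ octaProj l)) = Mmat := by
  rw [Fin.sum_univ_six, p0, p1, p2, p3, p4, p5]
  ext ⟨⟨a, b⟩, c⟩ ⟨⟨d, e⟩, f⟩
  fin_cases a <;> fin_cases b <;> fin_cases c <;> fin_cases d <;> fin_cases e <;> fin_cases f <;>
    simp only [Matrix.sub_apply, Matrix.add_apply, Matrix.smul_apply, Matrix.one_apply,
      kroneckerMap_apply, Matrix.cons_val', Matrix.cons_val_zero, Matrix.cons_val_one,
      Matrix.head_cons, Matrix.head_fin_const, Matrix.of_apply, Mmat, wt, smul_eq_mul] <;>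
    norm_num [Complex.ext_iff, Prod.ext_iff, Fin.ext_iff]


set_option maxHeartbeats 2000000 in
lemma hfac : Mmat = Mmatᴴ * Mmat := by
  ext ⟨⟨a, b⟩, c⟩ ⟨⟨d, e⟩, f⟩
  fin_cases a <;> fin_cases b <;> fin_cases c <;> fin_cases d <;> fin_cases e <;> fin_cases f <;>
    simp only [Matrix.mul_apply, Matrix.conjTranspose_apply, Mmat, wt, Matrix.of_apply,
      Fintype.sum_prod_type, Fin.sum_univ_two] <;>
    norm_num [Complex.ext_iff, Prod.ext_iff, Fin.ext_iff]

/-- With `P_l^{(3)} = (2/3)(|φ_l⟩⟨φ_l|)^{⊗3}` for `1 ≤ l ≤ 6`, the remainder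
`P₇^{(3)} = I₈ − Σ_{l=1}^{6} P_l^{(3)}` is positive semidefinite, so the seven
operators form a valid POVM on `(ℂ²)^{⊗3}`. -/
theorem three_copy_collective_povm_psd :
    ((1 : Matrix ((Fin 2 × Fin 2) × Fin 2) ((Fin 2 × Fin 2) × Fin 2) ℂ) -
      ∑ l : Fin 6, (2/3 : ℂ) • ((octaProj l ⊗ₖ octaProj l) ⊗ₖ octaProj l)).PosSemidef := by
  rw [hM, hfac]
  exact Matrix.posSemidef_conjTranspose_mul_self Mmat
end
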